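/- Let f: [0,∞) → ℝ be continuous and suppose there exists A ∈ ℝ with f(x)/(1+x²) → A as x → ∞. Then for every 0 ≤ a < b < ∞, the sequence of functions x ↦ K_n^μ(f; x) converges uniformly to f on [a,b] as n → ∞. -/

import Mathlib

/-!
`K_n^μ` is a positive operator that reproduces constants: the weights `q_i(nx)/γ_μ(i)` are the
Cauchy product of the coefficients of `e_μ` and of `Q`, so they sum to `Q(1) e_μ(nx)`. The
recursion `γ_μ(i+1) = λ_{i+1} γ_μ(i)`, with nodes `λ_i = i + 2μθ_i`, gives
`Σ λ_i y^i/γ_μ(i) = y e_μ(y)` and `Σ λ_i λ_{i-1} y^i/γ_μ(i) = y² e_μ(y)`; since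
`|λ_{j+k} - λ_j| ≤ k + 2μ`, the central second moment of `K_n^μ` at `x` is then `O(1/n)`
uniformly for `x ∈ [0, q]`. On the other hand `|f t - f x| ≤ ε + M (t - x)²` on
`[0, q] × [0, ∞)`, by uniform continuity for `t` near `x` and by the growth `f = O(1 + t²)` for
`t` far from `x`. Averaging this with the weights gives `|K_n^μ(f; x) - f x| ≤ ε + M · O(1/n)`.
-/

open scoped BigOperators

/-- The Dunkl coefficients γ_μ(i). -/
noncomputable def gammaMu (μ : ℝ) (i : ℕ) : ℝ :=
  if Even i then
    2 ^ i * (Nat.factorial (i / 2)) *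
      Real.Gamma (((i / 2 : ℕ) : ℝ) + μ + 1 / 2) / Real.Gamma (μ + 1 / 2)
  else
    2 ^ i * (Nat.factorial (i / 2)) *
      Real.Gamma (((i / 2 : ℕ) : ℝ) + μ + 3 / 2) / Real.Gamma (μ + 1 / 2)

/-- θ_i = 0 if i is even, 1 if i is odd. -/
noncomputable def thetaFn (i : ℕ) : ℝ := if Even i then 0 else 1

/-- The Dunkl exponential e_μ(x) = Σ x^i / γ_μ(i). -/
noncomputable def dunklExp (μ : ℝ) (x : ℝ) : ℝ := ∑' i : ℕ, x ^ i / gammaMu μ i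

/-- The Dunkl operator (Λ_μ f)(x) = f'(x) + μ (f(x) - f(-x)) / x. -/
noncomputable def dunklOp (μ : ℝ) (f : ℝ → ℝ) (x : ℝ) : ℝ :=
  deriv f x + μ * (f x - f (-x)) / x

/-- Q(t) = Σ c_i t^i / γ_μ(i). -/
noncomputable def Qf (μ : ℝ) (c : ℕ → ℝ) (t : ℝ) : ℝ := ∑' i : ℕ, c i * t ^ i / gammaMu μ i

/-- The Dunkl–Appell polynomials q_i(x) = Σ_{j=0}^i (γ_μ(i)/(γ_μ(j)γ_μ(i-j))) c_{i-j} x^j. -/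
noncomputable def qPoly (μ : ℝ) (c : ℕ → ℝ) (i : ℕ) (x : ℝ) : ℝ :=
  ∑ j ∈ Finset.range (i + 1),
    gammaMu μ i / (gammaMu μ j * gammaMu μ (i - j)) * c (i - j) * x ^ j

/-- The operators K_n^μ(f;x). -/
noncomputable def Kop (μ : ℝ) (c : ℕ → ℝ) (n : ℕ) (f : ℝ → ℝ) (x : ℝ) : ℝ :=
  1 / (Qf μ c 1 * dunklExp μ (n * x)) *
    ∑' i : ℕ, qPoly μ c i (n * x) / gammaMu μ i * f (((i : ℝ) + 2 * μ * thetaFn i) / n)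

open Filter Topology Finset
open scoped Nat

/-- The nodes `λ_i = i + 2μθ_i`: `K_n^μ` samples `f` at `λ_i / n`. -/
noncomputable def lamMu (μ : ℝ) (i : ℕ) : ℝ := i + 2 * μ * thetaFn i

lemma thetaFn_mem_Icc (i : ℕ) : thetaFn i ∈ Set.Icc (0 : ℝ) 1 := by
  unfold thetaFn; split <;> norm_num

section Nodes

variable {μ : ℝ}

lemma lamMu_zero : lamMu μ 0 = 0 := by simp [lamMu, thetaFn]

lemma lamMu_two_mul (k : ℕ) : lamMu μ (2 * k) = 2 * k := by simp [lamMu, thetaFn]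

lemma lamMu_two_mul_add_one (k : ℕ) : lamMu μ (2 * k + 1) = 2 * k + 1 + 2 * μ := by
  simp [lamMu, thetaFn, Nat.not_even_bit1]

lemma natCast_le_lamMu (hμ : 0 ≤ μ) (i : ℕ) : (i : ℝ) ≤ lamMu μ i := by
  have := (thetaFn_mem_Icc i).1
  unfold lamMu; nlinarith

lemma lamMu_nonneg (hμ : 0 ≤ μ) (i : ℕ) : 0 ≤ lamMu μ i :=
  (Nat.cast_nonneg i).trans (natCast_le_lamMu hμ i)

lemma abs_lamMu_add_sub_le (hμ : 0 ≤ μ) (j k : ℕ) :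
    |lamMu μ (j + k) - lamMu μ j| ≤ k + 2 * μ := by
  obtain ⟨h₀, h₁⟩ := thetaFn_mem_Icc (j + k)
  obtain ⟨h₂, h₃⟩ := thetaFn_mem_Icc j
  rw [abs_le]; unfold lamMu; push_cast
  constructor <;> nlinarith

lemma lamMu_sub_lamMu_pred_le (hμ : 0 ≤ μ) (i : ℕ) : lamMu μ i - lamMu μ (i - 1) ≤ 1 + 2 * μ := by
  cases i with
  | zero => simp only [Nat.zero_sub, sub_self]; linarith
  | succ i => simpa using (abs_le.mp (abs_lamMu_add_sub_le hμ i 1)).2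

lemma sq_lamMu_add_sub_le (hμ : 0 ≤ μ) (y : ℝ) (j k : ℕ) :
    (lamMu μ (j + k) - y) ^ 2 ≤ 2 * (lamMu μ j - y) ^ 2 + 2 * (k + 2 * μ) ^ 2 := by
  have h := sq_le_sq' (abs_le.mp (abs_lamMu_add_sub_le hμ j k)).1
    (abs_le.mp (abs_lamMu_add_sub_le hμ j k)).2
  nlinarith [sq_nonneg (lamMu μ (j + k) - 2 * lamMu μ j + y)]

end Nodes

section Gamma

variable {μ : ℝ}

lemma gammaMu_two_mul (k : ℕ) :
    gammaMu μ (2 * k) =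
      2 ^ (2 * k) * k ! * Real.Gamma (k + μ + 1 / 2) / Real.Gamma (μ + 1 / 2) := by
  simp [gammaMu]

lemma gammaMu_two_mul_add_one (k : ℕ) :
    gammaMu μ (2 * k + 1) =
      2 ^ (2 * k + 1) * k ! * Real.Gamma (k + μ + 3 / 2) / Real.Gamma (μ + 1 / 2) := by
  have hk : (2 * k + 1) / 2 = k := by omega
  simp [gammaMu, Nat.not_even_bit1, hk]

lemma gammaMu_pos (hμ : 0 ≤ μ) (i : ℕ) : 0 < gammaMu μ i := by
  have h₀ : 0 < Real.Gamma (μ + 1 / 2) := Real.Gamma_pos_of_pos (by linarith)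
  unfold gammaMu
  split
  · have := Real.Gamma_pos_of_pos (s := ((i / 2 : ℕ) : ℝ) + μ + 1 / 2) (by positivity)
    positivity
  · have := Real.Gamma_pos_of_pos (s := ((i / 2 : ℕ) : ℝ) + μ + 3 / 2) (by positivity)
    positivity

lemma gammaMu_zero (hμ : 0 ≤ μ) : gammaMu μ 0 = 1 := by
  have := (Real.Gamma_pos_of_pos (s := μ + 1 / 2) (by linarith)).ne'
  simpa [gammaMu] using div_self this

lemma gammaMu_succ (hμ : 0 ≤ μ) (i : ℕ) : gammaMu μ (i + 1) = gammaMu μ i * lamMu μ (i + 1) := by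
  obtain ⟨k, rfl | rfl⟩ := Nat.even_or_odd' i
  · have hΓ := Real.Gamma_add_one (s := (k : ℝ) + μ + 1 / 2) (by positivity)
    rw [gammaMu_two_mul_add_one, gammaMu_two_mul, lamMu_two_mul_add_one,
      show (k : ℝ) + μ + 3 / 2 = k + μ + 1 / 2 + 1 by ring, hΓ]
    ring
  · rw [show 2 * k + 1 + 1 = 2 * (k + 1) by ring, gammaMu_two_mul, gammaMu_two_mul_add_one,
      lamMu_two_mul, Nat.factorial_succ]
    push_cast
    ring_nf

lemma factorial_le_gammaMu (hμ : 0 ≤ μ) (i : ℕ) : (i ! : ℝ) ≤ gammaMu μ i := by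
  induction i with
  | zero => simp [gammaMu_zero hμ]
  | succ i ih =>
    rw [gammaMu_succ hμ, Nat.factorial_succ, Nat.cast_mul, mul_comm]
    exact mul_le_mul ih (natCast_le_lamMu hμ _) (by positivity) (gammaMu_pos hμ i).le

end Gamma

lemma summable_and_tsum_le_of_le_of_hasSum {f g : ℕ → ℝ} {b : ℝ} (hf : ∀ i, 0 ≤ f i)
    (hfg : ∀ i, f i ≤ g i) (hg : HasSum g b) : Summable f ∧ ∑' i, f i ≤ b := by
  have hfs : Summable f := hg.summable.of_nonneg_of_le hf hfg
  exact ⟨hfs, hasSum_le hfg hfs.hasSum hg⟩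

section DunklExp

variable {μ : ℝ}

lemma summable_norm_pow_div_gammaMu (hμ : 0 ≤ μ) (y : ℝ) :
    Summable fun i : ℕ => ‖y ^ i / gammaMu μ i‖ := by
  refine (Real.summable_pow_div_factorial |y|).of_nonneg_of_le (fun _ => norm_nonneg _) fun i => ?_
  rw [norm_div, norm_pow, Real.norm_eq_abs, Real.norm_eq_abs, abs_of_pos (gammaMu_pos hμ i)]
  exact div_le_div_of_nonneg_left (by positivity) (by positivity) (factorial_le_gammaMu hμ i)

lemma hasSum_dunklExp (hμ : 0 ≤ μ) (y : ℝ) :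
    HasSum (fun i : ℕ => y ^ i / gammaMu μ i) (dunklExp μ y) :=
  (summable_norm_pow_div_gammaMu hμ y).of_norm.hasSum

lemma one_le_dunklExp (hμ : 0 ≤ μ) {y : ℝ} (hy : 0 ≤ y) : 1 ≤ dunklExp μ y := by
  have h := le_hasSum (hasSum_dunklExp hμ y) 0 fun i _ => by
    have := gammaMu_pos hμ i; positivity
  simpa [gammaMu_zero hμ] using h

lemma lamMu_succ_mul_pow_div_gammaMu (hμ : 0 ≤ μ) (y : ℝ) (i : ℕ) :
    lamMu μ (i + 1) * (y ^ (i + 1) / gammaMu μ (i + 1)) = y * (y ^ i / gammaMu μ i) := by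
  have hl : 0 < lamMu μ (i + 1) := by
    have := natCast_le_lamMu hμ (i + 1); push_cast at this; linarith
  have := gammaMu_pos hμ i
  rw [gammaMu_succ hμ, pow_succ]
  field_simp

lemma hasSum_lamMu_mul_pow_div_gammaMu (hμ : 0 ≤ μ) (y : ℝ) :
    HasSum (fun i : ℕ => lamMu μ i * (y ^ i / gammaMu μ i)) (y * dunklExp μ y) := by
  rw [← hasSum_nat_add_iff' 1]
  simpa [lamMu_zero, lamMu_succ_mul_pow_div_gammaMu hμ] using (hasSum_dunklExp hμ y).mul_left y

lemma hasSum_lamMu_mul_lamMu_pred_mul_pow_div_gammaMu (hμ : 0 ≤ μ) (y : ℝ) :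
    HasSum (fun i : ℕ => lamMu μ i * lamMu μ (i - 1) * (y ^ i / gammaMu μ i))
      (y ^ 2 * dunklExp μ y) := by
  rw [← hasSum_nat_add_iff' 2]
  have h (i : ℕ) : lamMu μ (i + 2) * lamMu μ (i + 1) * (y ^ (i + 2) / gammaMu μ (i + 2)) =
      y ^ 2 * (y ^ i / gammaMu μ i) := by
    linear_combination lamMu μ (i + 1) * lamMu_succ_mul_pow_div_gammaMu hμ y (i + 1) +
      y * lamMu_succ_mul_pow_div_gammaMu hμ y i
  simpa [Finset.sum_range_succ, lamMu_zero, h] using (hasSum_dunklExp hμ y).mul_left (y ^ 2)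

lemma central_moment_dunklExp_le (hμ : 0 ≤ μ) {y : ℝ} (hy : 0 ≤ y) :
    Summable (fun i : ℕ => (lamMu μ i - y) ^ 2 * (y ^ i / gammaMu μ i)) ∧
      ∑' i : ℕ, (lamMu μ i - y) ^ 2 * (y ^ i / gammaMu μ i) ≤ (1 + 2 * μ) * y * dunklExp μ y := by
  have hsum := ((hasSum_lamMu_mul_lamMu_pred_mul_pow_div_gammaMu hμ y).add
    ((hasSum_lamMu_mul_pow_div_gammaMu hμ y).mul_left (1 + 2 * μ - 2 * y))).add
    ((hasSum_dunklExp hμ y).mul_left (y ^ 2))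
  rw [show y ^ 2 * dunklExp μ y + (1 + 2 * μ - 2 * y) * (y * dunklExp μ y) +
    y ^ 2 * dunklExp μ y = (1 + 2 * μ) * y * dunklExp μ y by ring] at hsum
  refine summable_and_tsum_le_of_le_of_hasSum (fun i => ?_) (fun i => ?_) hsum
  · have := gammaMu_pos hμ i; positivity
  · -- `(λ_i - y)² = λ_i λ_{i-1} + λ_i (λ_i - λ_{i-1}) - 2yλ_i + y²`
    have he : 0 ≤ y ^ i / gammaMu μ i := by have := gammaMu_pos hμ i; positivity
    have hstep := mul_le_mul_of_nonneg_left (lamMu_sub_lamMu_pred_le hμ i) (lamMu_nonneg hμ i)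
    have := mul_le_mul_of_nonneg_right hstep he
    nlinarith

end DunklExp

section Appell

variable {μ : ℝ} {c : ℕ → ℝ}

lemma qPoly_div_gammaMu (hμ : 0 ≤ μ) (c : ℕ → ℝ) (i : ℕ) (y : ℝ) :
    qPoly μ c i y / gammaMu μ i =
      ∑ j ∈ range (i + 1), y ^ j / gammaMu μ j * (c (i - j) / gammaMu μ (i - j)) := by
  rw [qPoly, sum_div]
  refine sum_congr rfl fun j _ => ?_
  have := gammaMu_pos hμ i
  have := gammaMu_pos hμ j
  have := gammaMu_pos hμ (i - j)
  field_simp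

lemma hasSum_qPoly_div_gammaMu (hμ : 0 ≤ μ) (hc : Summable fun k => |c k / gammaMu μ k|)
    (y : ℝ) :
    HasSum (fun i => qPoly μ c i y / gammaMu μ i) (dunklExp μ y * ∑' k, c k / gammaMu μ k) := by
  simp_rw [qPoly_div_gammaMu hμ]
  rw [← (hasSum_dunklExp hμ y).tsum_eq]
  exact hasSum_sum_range_mul_of_summable_norm (f := fun j => y ^ j / gammaMu μ j)
    (g := fun k => c k / gammaMu μ k) (summable_norm_pow_div_gammaMu hμ y)
    (by simpa only [Real.norm_eq_abs] using hc)

lemma summable_sq_mul_abs_div_gammaMu (hμ : 0 ≤ μ)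
    (hc₄ : Summable fun k => |c k * 4 ^ k / gammaMu μ k|) :
    Summable fun k : ℕ => ((k : ℝ) + 2 * μ) ^ 2 * |c k / gammaMu μ k| := by
  refine (hc₄.mul_left ((1 + 2 * μ) ^ 2)).of_nonneg_of_le (fun k => by positivity) fun k => ?_
  have hk : (k : ℝ) + 1 ≤ 2 ^ k := by exact_mod_cast Nat.lt_two_pow_self
  have hpow : ((k : ℝ) + 2 * μ) ^ 2 ≤ (1 + 2 * μ) ^ 2 * 4 ^ k := by
    rw [show (4 : ℝ) ^ k = (2 ^ k) ^ 2 by rw [← pow_mul, mul_comm, pow_mul]; norm_num,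
      ← mul_pow]
    gcongr
    nlinarith
  rw [mul_div_right_comm, abs_mul, abs_of_pos (by positivity : (0 : ℝ) < 4 ^ k)]
  nlinarith [abs_nonneg (c k / gammaMu μ k)]

lemma sq_sub_mul_qPoly_div_gammaMu_le (hμ : 0 ≤ μ) {y : ℝ} (hy : 0 ≤ y) (c : ℕ → ℝ) (i : ℕ) :
    (lamMu μ i - y) ^ 2 * (qPoly μ c i y / gammaMu μ i) ≤
      2 * ∑ j ∈ range (i + 1),
          (lamMu μ j - y) ^ 2 * (y ^ j / gammaMu μ j) * |c (i - j) / gammaMu μ (i - j)| +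
        2 * ∑ j ∈ range (i + 1), y ^ j / gammaMu μ j *
          ((((i - j : ℕ) : ℝ) + 2 * μ) ^ 2 * |c (i - j) / gammaMu μ (i - j)|) := by
  rw [qPoly_div_gammaMu hμ, mul_sum, mul_sum, mul_sum, ← sum_add_distrib]
  refine sum_le_sum fun j hj => ?_
  have hsq := sq_lamMu_add_sub_le hμ y j (i - j)
  rw [Nat.add_sub_cancel' (by simpa [Nat.lt_succ_iff] using hj)] at hsq
  have he : 0 ≤ y ^ j / gammaMu μ j := by have := gammaMu_pos hμ j; positivity
  calc (lamMu μ i - y) ^ 2 * (y ^ j / gammaMu μ j * (c (i - j) / gammaMu μ (i - j)))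
      ≤ (lamMu μ i - y) ^ 2 * (y ^ j / gammaMu μ j * |c (i - j) / gammaMu μ (i - j)|) := by
        gcongr; exact le_abs_self _
    _ ≤ (2 * (lamMu μ j - y) ^ 2 + 2 * (((i - j : ℕ) : ℝ) + 2 * μ) ^ 2) *
          (y ^ j / gammaMu μ j * |c (i - j) / gammaMu μ (i - j)|) := by gcongr
    _ = _ := by ring

lemma central_moment_qPoly_le (hμ : 0 ≤ μ) (hc : Summable fun k => |c k / gammaMu μ k|)
    (hc₄ : Summable fun k => |c k * 4 ^ k / gammaMu μ k|) {y : ℝ} (hy : 0 ≤ y)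
    (hq : ∀ i, 0 ≤ qPoly μ c i y) :
    Summable (fun i => (lamMu μ i - y) ^ 2 * (qPoly μ c i y / gammaMu μ i)) ∧
      ∑' i, (lamMu μ i - y) ^ 2 * (qPoly μ c i y / gammaMu μ i) ≤
        2 * dunklExp μ y * ((1 + 2 * μ) * y * ∑' k, |c k / gammaMu μ k| +
          ∑' k : ℕ, ((k : ℝ) + 2 * μ) ^ 2 * |c k / gammaMu μ k|) := by
  obtain ⟨hs, hle⟩ := central_moment_dunklExp_le hμ hy
  have H₁ := hasSum_sum_range_mul_of_summable_norm
    (f := fun j => (lamMu μ j - y) ^ 2 * (y ^ j / gammaMu μ j))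
    (g := fun k => |c k / gammaMu μ k|) (summable_norm_iff.mpr hs)
    (summable_norm_iff.mpr hc)
  have H₂ := hasSum_sum_range_mul_of_summable_norm (f := fun j => y ^ j / gammaMu μ j)
    (g := fun k : ℕ => ((k : ℝ) + 2 * μ) ^ 2 * |c k / gammaMu μ k|)
    (summable_norm_pow_div_gammaMu hμ y)
    (summable_norm_iff.mpr (summable_sq_mul_abs_div_gammaMu hμ hc₄))
  rw [(hasSum_dunklExp hμ y).tsum_eq] at H₂
  refine (summable_and_tsum_le_of_le_of_hasSum (fun i => ?_)
    (sq_sub_mul_qPoly_div_gammaMu_le hμ hy c) ((H₁.mul_left 2).add (H₂.mul_left 2))).imp_right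
    fun h => h.trans ?_
  · have := gammaMu_pos hμ i; have := hq i; positivity
  · have := mul_le_mul_of_nonneg_right hle
      (tsum_nonneg fun k => abs_nonneg (c k / gammaMu μ k) : 0 ≤ ∑' k, |c k / gammaMu μ k|)
    linarith

end Appell

lemma summable_and_abs_tsum_mul_sub_le {w s g : ℕ → ℝ} {a ε M : ℝ} (hw : ∀ i, 0 ≤ w i)
    (hws : Summable w) (hwss : Summable fun i => w i * s i)
    (h : ∀ i, |g i - a| ≤ ε + M * s i) :
    Summable (fun i => w i * g i) ∧
      |∑' i, w i * g i - a * ∑' i, w i| ≤ ε * ∑' i, w i + M * ∑' i, w i * s i := by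
  have hbound (i : ℕ) : ‖w i * (g i - a)‖ ≤ ε * w i + M * (w i * s i) := by
    rw [Real.norm_eq_abs, abs_mul, abs_of_nonneg (hw i)]
    nlinarith [mul_le_mul_of_nonneg_left (h i) (hw i)]
  have hmaj : Summable fun i => ε * w i + M * (w i * s i) :=
    (hws.mul_left ε).add (hwss.mul_left M)
  have hd : Summable fun i => w i * (g i - a) := hmaj.of_norm_bounded hbound
  have hwg : Summable fun i => w i * g i := (hd.add (hws.mul_left a)).congr fun i => by ring
  refine ⟨hwg, ?_⟩
  rw [← tsum_mul_left, ← hwg.tsum_sub (hws.mul_left a), ← tsum_mul_left, ← tsum_mul_left,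
    ← (hws.mul_left ε).tsum_add (hwss.mul_left M)]
  calc |∑' i, (w i * g i - a * w i)| = ‖∑' i, w i * (g i - a)‖ := by
        rw [Real.norm_eq_abs]; congr 1; exact tsum_congr fun i => by ring
    _ ≤ ∑' i, ‖w i * (g i - a)‖ := norm_tsum_le_tsum_norm hd.norm
    _ ≤ _ := hd.norm.tsum_le_tsum hbound hmaj

section Majorant

variable {f : ℝ → ℝ}

lemma exists_abs_le_mul_one_add_sq (hf : ContinuousOn f (Set.Ici 0)) {A : ℝ}
    (hfA : Tendsto (fun x => f x / (1 + x ^ 2)) atTop (𝓝 A)) :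
    ∃ C, ∀ t, 0 ≤ t → |f t| ≤ C * (1 + t ^ 2) := by
  obtain ⟨s, hs, hbdd⟩ := Metric.exists_isBounded_image_of_tendsto hfA
  obtain ⟨R, hR⟩ := mem_atTop_sets.mp hs
  have hg : ContinuousOn (fun x => f x / (1 + x ^ 2)) (Set.Icc 0 R) :=
    (hf.mono Set.Icc_subset_Ici_self).div (by fun_prop) fun x _ => by positivity
  obtain ⟨C, hC⟩ := ((isCompact_Icc.image_of_continuousOn hg).isBounded.union hbdd).exists_norm_le
  refine ⟨C, fun t ht => ?_⟩
  have hCt := hC _ <| by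
    rcases le_total t R with htR | hRt
    · exact Or.inl ⟨t, ⟨ht, htR⟩, rfl⟩
    · exact Or.inr ⟨t, hR t hRt, rfl⟩
  have hpos : 0 < 1 + t ^ 2 := by positivity
  rwa [Real.norm_eq_abs, abs_div, abs_of_pos hpos, div_le_iff₀ hpos] at hCt

lemma exists_abs_sub_le_add_mul_sq (hf : ContinuousOn f (Set.Ici 0)) {C : ℝ}
    (hC : ∀ t, 0 ≤ t → |f t| ≤ C * (1 + t ^ 2)) (R : ℝ) {ε : ℝ} (hε : 0 < ε) :
    ∃ M, 0 ≤ M ∧ ∀ x ∈ Set.Icc 0 R, ∀ t, 0 ≤ t → |f t - f x| ≤ ε + M * (t - x) ^ 2 := by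
  have hUC : UniformContinuousOn f (Set.Icc 0 (R + 1)) :=
    isCompact_Icc.uniformContinuousOn_of_continuous (hf.mono Set.Icc_subset_Ici_self)
  obtain ⟨δ₀, hδ₀, hclose⟩ := Metric.uniformContinuousOn_iff.mp hUC ε hε
  set δ := min δ₀ 1
  have hδ : 0 < δ := lt_min hδ₀ one_pos
  have hC₀ : 0 ≤ C := by
    have := hC 0 le_rfl
    norm_num at this
    linarith [abs_nonneg (f 0)]
  refine ⟨C * (2 + 3 * R ^ 2) / δ ^ 2 + 2 * C, by positivity, fun x hx t ht => ?_⟩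
  have hM : 0 ≤ (C * (2 + 3 * R ^ 2) / δ ^ 2 + 2 * C) * (t - x) ^ 2 := by positivity
  rcases lt_or_ge |t - x| δ with hnear | hfar
  · have hδ₁ := abs_lt.mp (hnear.trans_le (min_le_right δ₀ 1))
    have := hclose t ⟨ht, by linarith [hx.2]⟩ x ⟨hx.1, by linarith [hx.2]⟩
      (by rw [Real.dist_eq]; exact hnear.trans_le (min_le_left _ _))
    rw [Real.dist_eq] at this
    linarith
  · have hδt : δ ^ 2 ≤ (t - x) ^ 2 := by simpa using pow_le_pow_left₀ hδ.le hfar 2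
    have hxR : x ^ 2 ≤ R ^ 2 := pow_le_pow_left₀ hx.1 hx.2 2
    have hfar' : C * (2 + 3 * R ^ 2) ≤ C * (2 + 3 * R ^ 2) / δ ^ 2 * (t - x) ^ 2 := by
      rw [div_mul_eq_mul_div, le_div_iff₀ (by positivity)]
      exact mul_le_mul_of_nonneg_left hδt (by positivity)
    have ht₂ : t ^ 2 + x ^ 2 ≤ 3 * R ^ 2 + 2 * (t - x) ^ 2 := by nlinarith [sq_nonneg (t - 2 * x)]
    calc |f t - f x| ≤ |f t| + |f x| := abs_sub _ _
      _ ≤ C * (1 + t ^ 2) + C * (1 + x ^ 2) := add_le_add (hC t ht) (hC x hx.1)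
      _ ≤ C * (2 + 3 * R ^ 2) + 2 * C * (t - x) ^ 2 := by
        nlinarith [mul_le_mul_of_nonneg_left ht₂ hC₀]
      _ ≤ ε + (C * (2 + 3 * R ^ 2) / δ ^ 2 + 2 * C) * (t - x) ^ 2 := by nlinarith

end Majorant

lemma abs_Kop_sub_le {μ : ℝ} (hμ : 0 ≤ μ) {c : ℕ → ℝ} (hc : Summable fun k => |c k / gammaMu μ k|)
    (hc₄ : Summable fun k => |c k * 4 ^ k / gammaMu μ k|)
    (hq : ∀ i x, 0 ≤ x → 0 ≤ qPoly μ c i x) (hQ1 : 0 < Qf μ c 1) {f : ℝ → ℝ} {n : ℕ}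
    (hn : 1 ≤ n) {x ε M : ℝ} (hx : 0 ≤ x) (hM : 0 ≤ M)
    (hfx : ∀ t, 0 ≤ t → |f t - f x| ≤ ε + M * (t - x) ^ 2) :
    |Kop μ c n f x - f x| ≤ ε + M * (2 * ((1 + 2 * μ) * x * ∑' k, |c k / gammaMu μ k| +
      ∑' k : ℕ, ((k : ℝ) + 2 * μ) ^ 2 * |c k / gammaMu μ k|) / Qf μ c 1) / n := by
  set L₀ := ∑' k, |c k / gammaMu μ k|
  set L₂ := ∑' k : ℕ, ((k : ℝ) + 2 * μ) ^ 2 * |c k / gammaMu μ k|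
  set D := 2 * ((1 + 2 * μ) * x * L₀ + L₂) / Qf μ c 1 with hDdef
  have hn' : (1 : ℝ) ≤ n := by exact_mod_cast hn
  set y := (n : ℝ) * x with hydef
  have hy : 0 ≤ y := by positivity
  set W := Qf μ c 1 * dunklExp μ y with hWdef
  have hW : 0 < W := mul_pos hQ1 (one_pos.trans_le (one_le_dunklExp hμ hy))
  have hw : HasSum (fun i => qPoly μ c i y / gammaMu μ i) W := by
    rw [hWdef]
    have hQ : Qf μ c 1 = ∑' k, c k / gammaMu μ k := by simp [Qf]
    rw [mul_comm, hQ]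
    exact hasSum_qPoly_div_gammaMu hμ hc y
  obtain ⟨hs, hle⟩ := central_moment_qPoly_le hμ hc hc₄ hy fun i => hq i y hy
  have hscale (i : ℕ) : qPoly μ c i y / gammaMu μ i * (lamMu μ i / n - x) ^ 2 =
      ((n : ℝ) ^ 2)⁻¹ * ((lamMu μ i - y) ^ 2 * (qPoly μ c i y / gammaMu μ i)) := by
    field_simp
    ring
  have hmoment : ∑' i, qPoly μ c i y / gammaMu μ i * (lamMu μ i / n - x) ^ 2 ≤
      W * (D / n) := by
    have hn₀ : (0 : ℝ) < n := by linarith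
    rw [tsum_congr hscale, tsum_mul_left]
    calc ((n : ℝ) ^ 2)⁻¹ * ∑' i, (lamMu μ i - y) ^ 2 * (qPoly μ c i y / gammaMu μ i)
        ≤ ((n : ℝ) ^ 2)⁻¹ * (2 * dunklExp μ y * ((1 + 2 * μ) * y * L₀ + L₂)) := by gcongr
      _ = 2 * dunklExp μ y * ((1 + 2 * μ) * x * L₀ / n + L₂ / n ^ 2) := by
        rw [hydef]
        field_simp
      _ ≤ 2 * dunklExp μ y * ((1 + 2 * μ) * x * L₀ / n + L₂ / n) := by
        have := one_pos.trans_le (one_le_dunklExp hμ hy)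
        gcongr
        nlinarith
      _ = W * (D / n) := by
        rw [hWdef, hDdef]
        field_simp
  obtain ⟨-, hbound⟩ := summable_and_abs_tsum_mul_sub_le (fun i => by
      have := gammaMu_pos hμ i; have := hq i y hy; positivity) hw.summable
    ((hs.mul_left ((n : ℝ) ^ 2)⁻¹).congr fun i => (hscale i).symm)
    (fun i => hfx (lamMu μ i / n) (div_nonneg (lamMu_nonneg hμ i) (by positivity)))
  rw [hw.tsum_eq] at hbound
  change |1 / W * ∑' i, qPoly μ c i y / gammaMu μ i * f (lamMu μ i / n) - f x| ≤ _
  rw [show ∀ S, 1 / W * S - f x = (S - f x * W) / W by intro S; field_simp, abs_div,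
    abs_of_pos hW, div_le_iff₀ hW]
  have := mul_le_mul_of_nonneg_left hmoment hM
  linarith [show (ε + M * D / n) * W = ε * W + M * (W * (D / n)) by ring]

theorem Kop_uniform_convergence_general (μ : ℝ) (hμ : 0 ≤ μ) (c : ℕ → ℝ)
    (hQ : ∀ t : ℝ, Summable fun i : ℕ => |c i * t ^ i / gammaMu μ i|)
    (hq : ∀ i : ℕ, ∀ x : ℝ, 0 ≤ x → 0 ≤ qPoly μ c i x)
    (hQ1 : 0 < Qf μ c 1)
    (f : ℝ → ℝ) (hf : ContinuousOn f (Set.Ici 0))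
    (A : ℝ) (hfA : Filter.Tendsto (fun x => f x / (1 + x ^ 2)) Filter.atTop (nhds A))
    (p q : ℝ) (hp : 0 ≤ p) :
    TendstoUniformlyOn (fun n : ℕ => fun x => Kop μ c n f x) f Filter.atTop
      (Set.Icc p q) := by
  have hc : Summable fun k => |c k / gammaMu μ k| := by simpa using hQ 1
  obtain ⟨C, hC⟩ := exists_abs_le_mul_one_add_sq hf hfA
  set L₀ := ∑' k, |c k / gammaMu μ k|
  set L₂ := ∑' k : ℕ, ((k : ℝ) + 2 * μ) ^ 2 * |c k / gammaMu μ k|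
  have hL₀ : 0 ≤ L₀ := tsum_nonneg fun k => abs_nonneg _
  rw [Metric.tendstoUniformlyOn_iff]
  intro ε hε
  obtain ⟨M, hM, hfM⟩ := exists_abs_sub_le_add_mul_sq hf hC q (half_pos hε)
  set B := M * (2 * ((1 + 2 * μ) * q * L₀ + L₂) / Qf μ c 1) with hBdef
  obtain ⟨N, hN⟩ := exists_nat_gt (B / (ε / 2))
  filter_upwards [eventually_ge_atTop (max N 1)] with n hn x hx
  have hn₀ : (0 : ℝ) < n := by exact_mod_cast (le_of_max_le_right hn)
  have hx₀ : 0 ≤ x := hp.trans hx.1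
  have hB : B / n < ε / 2 := by
    rw [div_lt_iff₀ hn₀, ← div_lt_iff₀' (half_pos hε)]
    exact hN.trans_le (by exact_mod_cast le_of_max_le_left hn)
  rw [dist_comm, Real.dist_eq]
  calc |Kop μ c n f x - f x|
      ≤ ε / 2 + M * (2 * ((1 + 2 * μ) * x * L₀ + L₂) / Qf μ c 1) / n :=
        abs_Kop_sub_le hμ hc (hQ 4) hq hQ1 (le_of_max_le_right hn) hx₀ hM (hfM x ⟨hx₀, hx.2⟩)
    _ ≤ ε / 2 + B / n := by rw [hBdef]; gcongr; exact hx.2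
    _ < ε := by linarith

/-- Korovkin-type uniform convergence of K_n^μ(f;·) to f on compact intervals. -/
theorem Kop_uniform_convergence (μ : ℝ) (hμ : 0 ≤ μ) (c : ℕ → ℝ) (hc0 : c 0 ≠ 0)
    (hQ : ∀ t : ℝ, Summable fun i : ℕ => |c i * t ^ i / gammaMu μ i|)
    (hq : ∀ i : ℕ, ∀ x : ℝ, 0 ≤ x → 0 ≤ qPoly μ c i x)
    (hQ1 : 0 < Qf μ c 1)
    (f : ℝ → ℝ) (hf : ContinuousOn f (Set.Ici 0))
    (A : ℝ) (hfA : Filter.Tendsto (fun x => f x / (1 + x ^ 2)) Filter.atTop (nhds A))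
    (hfs : ∀ n : ℕ, 1 ≤ n → ∀ x : ℝ, 0 ≤ x → Summable fun i : ℕ =>
      |qPoly μ c i (n * x) / gammaMu μ i * f (((i : ℝ) + 2 * μ * thetaFn i) / n)|)
    (p q : ℝ) (hp : 0 ≤ p) (hpq : p < q) :
    TendstoUniformlyOn (fun n : ℕ => fun x => Kop μ c n f x) f Filter.atTop
      (Set.Icc p q) :=
  Kop_uniform_convergence_general μ hμ c hQ hq hQ1 f hf A hfA p q hp
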